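/- Let (G, μ) carry an automatic structure with language L, let H ≤ G be an L-quasi-convex subgroup, and let u₀ ∈ Ã* be any word. Then the language L ∩ μ⁻¹(H·μ(u₀)) = { v ∈ L : μ(v) ∈ H·μ(u₀) } (the set of all L-representatives of elements of the right coset H·μ(u₀)) is regular. -/

import Mathlib

open List

/-- A word over the alphabet Ã = A ∪ A⁻¹ is a `List (A × Bool)`: the letter `(a, true)`
stands for `a` and `(a, false)` for the formal inverse `a⁻¹`. A word is *reduced* if it
has no factor `a·a⁻¹` or `a⁻¹·a`. -/
def Reduced {A : Type*} (w : List (A × Bool)) : Prop :=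
  w.Chain' fun p q => ¬(p.1 = q.1 ∧ q.2 = !p.2)

variable {A : Type*} [Fintype A] {G : Type*} [Group G]

/-- Evaluation in `G` of a word over Ã, determined by the images `f a` of the letters.
This is the (inverse-respecting) monoid homomorphism μ : Ã* → G. -/
def eval (f : A → G) (w : List (A × Bool)) : G :=
  (w.map fun p => if p.2 then f p.1 else (f p.1)⁻¹).prod

/-- Word length of `g ∈ G` with respect to the generators `A`:
the least length of a word over Ã mapping onto `g`. -/
noncomputable def wlen (f : A → G) (g : G) : ℕ :=
  sInf {n | ∃ w : List (A × Bool), eval f w = g ∧ w.length = n}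

/-- A rational structure: `L` is a regular language of reduced words with μ(L) = G. -/
def RationalStructure (f : A → G) (L : Set (List (A × Bool))) : Prop :=
  Language.IsRegular (L : Language (A × Bool)) ∧ (∀ w ∈ L, Reduced w) ∧
    ∀ g : G, ∃ w ∈ L, eval f w = g

/-- `H` is L-quasi-convex with constant `k`: for every `w ∈ L` with `μ(w) ∈ H` and
every prefix `u` of `w`, there is `h ∈ H` with `|h⁻¹ μ(u)| ≤ k`. -/
def QCW (f : A → G) (L : Set (List (A × Bool))) (H : Subgroup G) (k : ℕ) : Prop :=
  ∀ w ∈ L, eval f w ∈ H → ∀ u, u <+: w → ∃ h ∈ H, wlen f (h⁻¹ * eval f u) ≤ k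

/-- The set of right cosets `H·μ(u)` where `u` ranges over prefixes of words
`w ∈ L` with `μ(w) ∈ H` (the vertex set of the Stallings graph Γ_L(H)). -/
def VL (f : A → G) (L : Set (List (A × Bool))) (H : Subgroup G) : Set (Set G) :=
  {S | ∃ w ∈ L, eval f w ∈ H ∧ ∃ u, u <+: w ∧ S = {x | ∃ h ∈ H, x = h * eval f u}}

/-- Padded convolution of two words: align letter by letter, padding the shorter
word on the right with the padding symbol □ (here `none`). -/
def conv {α : Type*} (u v : List α) : List (Option α × Option α) :=
  List.zip (u.map some ++ List.replicate (v.length - u.length) none)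
           (v.map some ++ List.replicate (u.length - v.length) none)

/-- An automatic structure on (G, μ) with language L: L is a regular language of
reduced words with μ(L) = G, and for every letter a ∈ Ã ∪ {1} (encoded as an
`Option (A × Bool)`), the padded convolution language
{ conv(u,v) : u, v ∈ L, μ(u·a) = μ(v) } is regular. -/
def AutomaticStructure (f : A → G) (L : Set (List (A × Bool))) : Prop :=
  Language.IsRegular (L : Language (A × Bool)) ∧ (∀ w ∈ L, Reduced w) ∧
    (∀ g : G, ∃ w ∈ L, eval f w = g) ∧
    ∀ x : Option (A × Bool),
      Language.IsRegular
        ({c | ∃ u ∈ L, ∃ v ∈ L, c = conv u v ∧ eval f (u ++ x.toList) = eval f v} :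
          Language (Option (A × Bool) × Option (A × Bool)))

/-! An automatic structure has the fellow traveller property: an accepting run of the
automaton for `L_a` can be completed from any point within boundedly many letters, so two
`L`-words whose values differ by a letter stay at bounded distance at all times, and by
chaining, `L`-words whose values differ by `μ(u₀)` do too. Applied to an `L`-representative
of `h ∈ H`, whose prefixes stay near `H` by quasi-convexity, this shows that every prefix of
an `L`-representative of an element of `H·μ(u₀)` lies within a fixed distance `K` of `H`.
Hence the right coset of each such prefix is one of the finitely many cosets meeting the
`K`-ball, and tracking that coset letter by letter is a finite automaton; intersecting its
language with `L` gives the representatives of `H·μ(u₀)`. -/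

open MulOpposite Pointwise

section Convolution

variable {α : Type*}

theorem length_conv (u v : List α) : (conv u v).length = max u.length v.length := by
  simp only [conv, length_zip, length_append, length_map, length_replicate]
  omega

theorem conv_take (u v : List α) (t : ℕ) :
    (conv u v).take t = conv (u.take t) (v.take t) := by
  simp only [conv, zip, take_zipWith, take_append, ← map_take, take_replicate, length_map,
    length_take]
  congr 4 <;> omega

theorem map_fst_conv (u v : List α) :
    (conv u v).map Prod.fst = u.map some ++ replicate (v.length - u.length) none :=
  map_fst_zip (by simp; omega)

theorem map_snd_conv (u v : List α) :
    (conv u v).map Prod.snd = v.map some ++ replicate (u.length - v.length) none :=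
  map_snd_zip (by simp; omega)

theorem conv_injective {u v u' v' : List α} (h : conv u v = conv u' v') :
    u = u' ∧ v = v' := by
  have hfst := congrArg (fun c => (c.map Prod.fst).reduceOption) h
  have hsnd := congrArg (fun c => (c.map Prod.snd).reduceOption) h
  simp only [map_fst_conv, map_snd_conv, reduceOption_append, reduceOption_replicate_none,
    append_nil] at hfst hsnd
  simpa [reduceOption] using And.intro hfst hsnd

end Convolution

namespace DFA

variable {α : Type*} {σ : Type*}

theorem exists_mem_accepts_length_lt_card [Fintype σ] (M : DFA α σ) {x : List α}
    (hx : x ∈ M.accepts) : ∃ y ∈ M.accepts, y.length < Fintype.card σ := by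
  induction hn : x.length using Nat.strong_induction_on generalizing x with
  | _ n ih =>
  by_cases hlt : x.length < Fintype.card σ
  · exact ⟨x, hx, hlt⟩
  obtain ⟨a, b, c, rfl, -, hb, hpump⟩ := M.pumping_lemma hx (not_lt.1 hlt)
  have hac : a ++ c ∈ M.accepts := hpump <| Language.mem_mul.2
    ⟨a, Language.mem_mul.2 ⟨a, rfl, [], Language.nil_mem_kstar _, append_nil a⟩, c, rfl, rfl⟩
  exact ih _ (by simp [← hn, length_pos_iff.2 hb]) hac rfl

theorem exists_append_mem_accepts_length_lt_card [Fintype σ] (M : DFA α σ) {x z : List α}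
    (h : x ++ z ∈ M.accepts) : ∃ y, x ++ y ∈ M.accepts ∧ y.length < Fintype.card σ := by
  let Mx : DFA α σ := ⟨M.step, M.eval x, M.accept⟩
  have hz : z ∈ Mx.accepts := by
    rwa [mem_accepts, eval, evalFrom_of_append] at h
  obtain ⟨y, hy, hlen⟩ := Mx.exists_mem_accepts_length_lt_card hz
  refine ⟨y, ?_, hlen⟩
  rwa [mem_accepts, eval, evalFrom_of_append]

open Classical in
noncomputable def restrict (M : DFA α σ) (C : Set σ) : DFA α (Option C) where
  step q a := q.bind fun s => if h : M.step s a ∈ C then some ⟨_, h⟩ else none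
  start := if h : M.start ∈ C then some ⟨_, h⟩ else none
  accept := {q | ∃ s ∈ q, (s : σ) ∈ M.accept}

theorem eval_restrict_eq_some (M : DFA α σ) {C : Set σ} {w : List α} {s : C} :
    (M.restrict C).eval w = some s ↔ (∀ p, p <+: w → M.eval p ∈ C) ∧ M.eval w = s := by
  induction w using List.reverseRecOn generalizing s with
  | nil =>
    simp only [eval_nil, restrict, prefix_nil, forall_eq]
    split_ifs with h
    · simp [Subtype.ext_iff, h]
    · simp [h]
  | append_singleton w a ih =>
    simp only [eval_append_singleton, prefix_concat_iff, or_imp, forall_and, forall_eq]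
    cases hw : (M.restrict C).eval w with
    | none =>
      have : ¬∀ p, p <+: w → M.eval p ∈ C := fun hC =>
        by simpa [hw] using (ih (s := ⟨_, hC w prefix_rfl⟩)).2 ⟨hC, rfl⟩
      simp [restrict, this]
    | some s' =>
      obtain ⟨hC, hs'⟩ := ih.1 hw
      simp only [restrict, Option.bind_some, hs']
      split_ifs with h
      · simpa [Subtype.ext_iff, h] using fun _ => hC
      · simp [h]

theorem accepts_restrict (M : DFA α σ) (C : Set σ) :
    (M.restrict C).accepts = {w | w ∈ M.accepts ∧ ∀ p, p <+: w → M.eval p ∈ C} := by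
  ext w
  simp only [mem_accepts]
  constructor
  · rintro ⟨s, hs, hacc⟩
    obtain ⟨hC, hw⟩ := M.eval_restrict_eq_some.1 hs
    exact ⟨hw ▸ hacc, hC⟩
  · rintro ⟨hacc, hC⟩
    exact ⟨⟨_, hC w prefix_rfl⟩, M.eval_restrict_eq_some.2 ⟨hC, rfl⟩, hacc⟩

theorem isRegular_setOf_mem_accepts_prefix_eval_mem (M : DFA α σ) {C : Set σ} (hC : C.Finite) :
    Language.IsRegular ({w | w ∈ M.accepts ∧ ∀ p, p <+: w → M.eval p ∈ C} : Language α) := by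
  have := hC.fintype
  exact Language.isRegular_iff.2 ⟨_, inferInstance, _, M.accepts_restrict C⟩

end DFA

theorem exists_take_eq_length_le_of_isRegular_conv {α : Type*} {L : Set (List α)}
    {P : List α → List α → Prop}
    (hreg : Language.IsRegular
      ({c | ∃ u ∈ L, ∃ v ∈ L, c = conv u v ∧ P u v} : Language (Option α × Option α))) :
    ∃ n, ∀ u ∈ L, ∀ v ∈ L, P u v → ∀ t, ∃ u' ∈ L, ∃ v' ∈ L, P u' v' ∧
      u'.take t = u.take t ∧ v'.take t = v.take t ∧ u'.length ≤ t + n ∧ v'.length ≤ t + n := by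
  obtain ⟨σ, _, N, hN⟩ := hreg
  refine ⟨Fintype.card σ, fun u hu v hv huv t => ?_⟩
  by_cases ht : max u.length v.length ≤ t
  · exact ⟨u, hu, v, hv, huv, rfl, rfl, by omega, by omega⟩
  have hmem : (conv u v).take t ++ (conv u v).drop t ∈ N.accepts := by
    rw [take_append_drop, hN]
    exact ⟨u, hu, v, hv, rfl, huv⟩
  obtain ⟨y, hy, hylen⟩ := N.exists_append_mem_accepts_length_lt_card hmem
  rw [hN] at hy
  obtain ⟨u', hu', v', hv', hconv, huv'⟩ := hy
  have htake : ((conv u v).take t).length = t := by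
    simp only [length_take, length_conv]
    omega
  have hpre : conv (u.take t) (v.take t) = conv (u'.take t) (v'.take t) := by
    rw [← conv_take, ← conv_take, ← hconv, take_left' htake]
  obtain ⟨hu, hv⟩ := conv_injective hpre
  have hlen := congrArg length hconv
  simp only [length_append, htake, length_conv] at hlen
  exact ⟨u', hu', v', hv', huv', hu.symm, hv.symm, by omega, by omega⟩

section
omit [Fintype A]

@[simp]
theorem eval_nil (f : A → G) : eval f [] = 1 :=
  rfl

@[simp]
theorem eval_append (f : A → G) (u v : List (A × Bool)) :
    eval f (u ++ v) = eval f u * eval f v := by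
  simp [eval]

theorem eval_eq_lift_mk (f : A → G) (w : List (A × Bool)) :
    eval f w = FreeGroup.lift f (FreeGroup.mk w) := by
  simp [eval, FreeGroup.lift_mk, Bool.cond_eq_ite]

@[simp]
theorem eval_invRev (f : A → G) (w : List (A × Bool)) :
    eval f (FreeGroup.invRev w) = (eval f w)⁻¹ := by
  rw [eval_eq_lift_mk, eval_eq_lift_mk, ← FreeGroup.inv_mk, map_inv]

theorem surjective_eval_of_forall_exists_mem {f : A → G} {L : Set (List (A × Bool))}
    (hL : ∀ g, ∃ w ∈ L, eval f w = g) : Function.Surjective (eval f) :=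
  fun g => (hL g).imp fun _ => And.right

theorem wlen_eval_le (f : A → G) (w : List (A × Bool)) : wlen f (eval f w) ≤ w.length :=
  Nat.sInf_le ⟨w, rfl, rfl⟩

theorem exists_eval_eq_length_eq_wlen {f : A → G} (hf : Function.Surjective (eval f)) (g : G) :
    ∃ w, eval f w = g ∧ w.length = wlen f g :=
  Nat.sInf_mem (s := {n | ∃ w, eval f w = g ∧ w.length = n})
    ((hf g).elim fun w hw => ⟨w.length, w, hw, rfl⟩)

theorem wlen_mul_le {f : A → G} (hf : Function.Surjective (eval f)) (g h : G) :
    wlen f (g * h) ≤ wlen f g + wlen f h := by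
  obtain ⟨u, rfl, hu⟩ := exists_eval_eq_length_eq_wlen hf g
  obtain ⟨v, rfl, hv⟩ := exists_eval_eq_length_eq_wlen hf h
  simpa [← hu, ← hv] using wlen_eval_le f (u ++ v)

theorem finite_setOf_wlen_le [Finite A] {f : A → G} (hf : Function.Surjective (eval f))
    (K : ℕ) :
    {g | wlen f g ≤ K}.Finite := by
  refine ((List.finite_length_le _ K).image (eval f)).subset fun g hg => ?_
  obtain ⟨w, hw, hlen⟩ := exists_eval_eq_length_eq_wlen hf g
  exact ⟨w, (le_of_eq hlen).trans hg, hw⟩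

def FellowTravel (f : A → G) (k : ℕ) (u v : List (A × Bool)) : Prop :=
  ∀ t, wlen f ((eval f (u.take t))⁻¹ * eval f (v.take t)) ≤ k

theorem FellowTravel.mono {f : A → G} {k k' : ℕ} {u v : List (A × Bool)}
    (h : FellowTravel f k u v) (hk : k ≤ k') : FellowTravel f k' u v :=
  fun t => (h t).trans hk

theorem FellowTravel.trans {f : A → G} (hf : Function.Surjective (eval f)) {k k' : ℕ}
    {u v w : List (A × Bool)} (huv : FellowTravel f k u v) (hvw : FellowTravel f k' v w) :
    FellowTravel f (k + k') u w := fun t => by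
  have hsplit : (eval f (u.take t))⁻¹ * eval f (w.take t) =
      ((eval f (u.take t))⁻¹ * eval f (v.take t)) *
        ((eval f (v.take t))⁻¹ * eval f (w.take t)) := by group
  rw [hsplit]
  exact (wlen_mul_le hf _ _).trans (add_le_add (huv t) (hvw t))

theorem exists_fellowTravel_of_isRegular_conv {f : A → G} {L : Set (List (A × Bool))}
    {z : List (A × Bool)}
    (hreg : Language.IsRegular
      ({c | ∃ u ∈ L, ∃ v ∈ L, c = conv u v ∧ eval f (u ++ z) = eval f v} :
        Language (Option (A × Bool) × Option (A × Bool)))) :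
    ∃ k, ∀ u ∈ L, ∀ v ∈ L, eval f (u ++ z) = eval f v → FellowTravel f k u v := by
  obtain ⟨n, hn⟩ := exists_take_eq_length_le_of_isRegular_conv hreg
  refine ⟨2 * n + z.length, fun u hu v hv huv t => ?_⟩
  obtain ⟨u', -, v', -, huv', hu', hv', hu'len, hv'len⟩ := hn u hu v hv huv t
  -- the two prefixes are joined by the rest of `u'`, then `z`, then the rest of `v'` backwards
  have hpath : (eval f (u.take t))⁻¹ * eval f (v.take t) =
      eval f (u'.drop t ++ z ++ FreeGroup.invRev (v'.drop t)) := by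
    rw [← take_append_drop t u', ← take_append_drop t v', hu', hv'] at huv'
    simp only [eval_append, eval_invRev] at huv' ⊢
    rw [inv_mul_eq_iff_eq_mul, ← mul_assoc, ← mul_assoc, eq_mul_inv_iff_mul_eq, ← huv']
  calc _ ≤ _ := hpath ▸ wlen_eval_le f _
    _ ≤ 2 * n + z.length := by
      simp only [length_append, length_drop, FreeGroup.invRev_length]
      omega

theorem AutomaticStructure.exists_fellowTravel [Finite A] {f : A → G}
    {L : Set (List (A × Bool))} (hAut : AutomaticStructure f L) :
    ∃ k, ∀ x : Option (A × Bool), ∀ u ∈ L, ∀ v ∈ L,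
      eval f (u ++ x.toList) = eval f v → FellowTravel f k u v := by
  choose k hk using fun x => exists_fellowTravel_of_isRegular_conv (hAut.2.2.2 x)
  obtain ⟨K, hK⟩ := Finite.bddAbove_range k
  exact ⟨K, fun x u hu v hv huv => (hk x u hu v hv huv).mono (hK ⟨x, rfl⟩)⟩

theorem fellowTravel_of_eval_eq_mul {f : A → G} {L : Set (List (A × Bool))} {k : ℕ}
    (hL : ∀ g, ∃ w ∈ L, eval f w = g)
    (hk : ∀ x : Option (A × Bool), ∀ u ∈ L, ∀ v ∈ L,
      eval f (u ++ x.toList) = eval f v → FellowTravel f k u v)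
    (z : List (A × Bool)) :
    ∀ u ∈ L, ∀ v ∈ L, eval f v = eval f u * eval f z →
      FellowTravel f ((z.length + 1) * k) u v := by
  induction z with
  | nil => exact fun u hu v hv huv => by simpa using hk none u hu v hv (by simpa using huv.symm)
  | cons a z ih =>
    intro u hu v hv huv
    obtain ⟨w, hw, huw⟩ := hL (eval f (u ++ [a]))
    have hwv : eval f v = eval f w * eval f z := by
      rw [huv, huw, eval_append, mul_assoc, ← eval_append f [a] z]
      rfl
    have huw' := hk (some a) u hu w hw huw.symm
    refine (huw'.trans (surjective_eval_of_forall_exists_mem hL) (ih w hw v hv hwv)).mono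
      (le_of_eq ?_)
    simp only [length_cons]
    ring

theorem AutomaticStructure.exists_wlen_le_of_prefix [Finite A] {f : A → G}
    {L : Set (List (A × Bool))} (hAut : AutomaticStructure f L) {H : Subgroup G} {k : ℕ}
    (hqc : QCW f L H k) (g : G) :
    ∃ K, ∀ v ∈ L, (∃ h ∈ H, eval f v = h * g) →
      ∀ p, p <+: v → ∃ h ∈ H, wlen f (h⁻¹ * eval f p) ≤ K := by
  obtain ⟨k₁, hk₁⟩ := hAut.exists_fellowTravel
  obtain ⟨-, -, hL, -⟩ := hAut
  have hf := surjective_eval_of_forall_exists_mem hL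
  obtain ⟨z, rfl⟩ := hf g
  refine ⟨k + (z.length + 1) * k₁, fun v hv ⟨h₀, hh₀, hvh₀⟩ p hp => ?_⟩
  obtain ⟨t, rfl⟩ : ∃ t, p = v.take t := ⟨_, prefix_iff_eq_take.1 hp⟩
  obtain ⟨w, hw, rfl⟩ := hL h₀
  obtain ⟨h, hh, hwh⟩ := hqc w hw hh₀ _ (take_prefix t w)
  have hwv := fellowTravel_of_eval_eq_mul hL hk₁ z w hw v hv hvh₀ t
  refine ⟨h, hh, ?_⟩
  calc wlen f (h⁻¹ * eval f (v.take t))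
      = wlen f ((h⁻¹ * eval f (w.take t)) * ((eval f (w.take t))⁻¹ * eval f (v.take t))) := by
        group
    _ ≤ _ := (wlen_mul_le hf _ _).trans (add_le_add hwh hwv)

def cosetDFA (f : A → G) (H : Subgroup G) (g : G) : DFA (A × Bool) (Set G) where
  step S a := op (eval f [a]) • S
  start := H
  accept := {op g • (H : Set G)}

theorem cosetDFA_eval (f : A → G) (H : Subgroup G) (g : G) (w : List (A × Bool)) :
    (cosetDFA f H g).eval w = op (eval f w) • (H : Set G) := by
  induction w using reverseRecOn with
  | nil => simp [cosetDFA]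
  | append_singleton w a ih =>
    rw [DFA.eval_append_singleton, ih, eval_append]
    exact rightCoset_assoc _ _ _

theorem mem_cosetDFA_accepts {f : A → G} {H : Subgroup G} {g : G} {w : List (A × Bool)} :
    w ∈ (cosetDFA f H g).accepts ↔ ∃ h ∈ H, eval f w = h * g := by
  rw [DFA.mem_accepts, cosetDFA_eval, cosetDFA, Set.mem_singleton_iff, rightCoset_eq_iff]
  constructor
  · exact fun hg => ⟨_, H.inv_mem hg, by group⟩
  · rintro ⟨h, hh, hw⟩
    simpa [hw] using H.inv_mem hh

end

/-- if (G, μ) has an automatic structure with language L, H ≤ G is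
L-quasi-convex, and u₀ is any word, then the set of all L-representatives of the
elements of the right coset H·μ(u₀) is regular. -/
theorem stmt9 (f : A → G) (L : Set (List (A × Bool)))
    (hAut : AutomaticStructure f L)
    (H : Subgroup G) (hqc : ∃ k, QCW f L H k) (u₀ : List (A × Bool)) :
    Language.IsRegular
      ({v | v ∈ L ∧ ∃ h ∈ H, eval f v = h * eval f u₀} : Language (A × Bool)) := by
  obtain ⟨k, hqc⟩ := hqc
  obtain ⟨K, hK⟩ := hAut.exists_wlen_le_of_prefix hqc (eval f u₀)
  have hf := surjective_eval_of_forall_exists_mem hAut.2.2.1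
  -- every prefix of a representative ends in one of the finitely many cosets meeting the `K`-ball
  set C := (fun b => op b • (H : Set G)) '' {b | wlen f b ≤ K}
  have hC : C.Finite := (finite_setOf_wlen_le hf K).image _
  refine (congrArg Language.IsRegular ?_).mp
    (hAut.1.inf ((cosetDFA f H (eval f u₀)).isRegular_setOf_mem_accepts_prefix_eval_mem hC))
  ext v
  constructor
  · rintro ⟨hv, hacc, -⟩
    exact ⟨hv, mem_cosetDFA_accepts.1 hacc⟩
  · rintro ⟨hv, hcoset⟩
    refine ⟨hv, mem_cosetDFA_accepts.2 hcoset, fun p hp => ?_⟩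
    obtain ⟨h, hh, hle⟩ := hK v hv hcoset p hp
    refine ⟨h⁻¹ * eval f p, hle, ?_⟩
    rw [cosetDFA_eval, rightCoset_eq_iff]
    simpa using hh
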